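/- arXiv:1506.00423 — 7 statements merged into one kernel-verified Lean document; each statement's English description precedes it below -/
import Mathlib

section
/- For fixed α ∈ (0,1] and integer T ≥ 1, the function m ↦ G(T,α,m) = (1/α)(1 - (1 - αm/T)(1 - α/T)^{T-m}) is nondecreasing in the integer m for 0 ≤ m ≤ T. -/
/-!
With `c = α / T ≤ 1`, one step `m ↦ m + 1` trades a factor `1 - c` of the power for the change
`1 - c m ↦ 1 - c (m + 1)`, and `(1 - c m)(1 - c) - (1 - c (m + 1)) = c² m ≥ 0`; so
`m ↦ (1 - c m)(1 - c)^(T - m)` is nonincreasing, and `G` is nondecreasing.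
-/

lemma one_sub_mul_succ_le_mul_one_sub (c : ℝ) (m : ℕ) :
    1 - c * (m + 1) ≤ (1 - c * m) * (1 - c) := by
  nlinarith [mul_nonneg (sq_nonneg c) m.cast_nonneg]

lemma one_sub_mul_mul_pow_sub_succ_le {c : ℝ} (hc : c ≤ 1) {N m : ℕ} (hm : m < N) :
    (1 - c * (m + 1 : ℕ)) * (1 - c) ^ (N - (m + 1)) ≤ (1 - c * m) * (1 - c) ^ (N - m) := by
  obtain ⟨k, rfl⟩ := Nat.exists_eq_add_of_lt hm
  have hk : m + k + 1 - m = (m + k + 1 - (m + 1)) + 1 := by omega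
  rw [hk, pow_succ, Nat.cast_succ, ← mul_assoc, mul_right_comm]
  exact mul_le_mul_of_nonneg_right (one_sub_mul_succ_le_mul_one_sub c m)
    (pow_nonneg (sub_nonneg.2 hc) _)

lemma one_sub_mul_mul_pow_sub_antitone {c : ℝ} (hc : c ≤ 1) {N m₁ m₂ : ℕ} (h12 : m₁ ≤ m₂)
    (h2N : m₂ ≤ N) :
    (1 - c * m₂) * (1 - c) ^ (N - m₂) ≤ (1 - c * m₁) * (1 - c) ^ (N - m₁) := by
  induction m₂, h12 using Nat.le_induction with
  | base => exact le_rfl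
  | succ m _ ih =>
    exact (one_sub_mul_mul_pow_sub_succ_le hc h2N).trans (ih (by omega))

theorem stmt_1 (α : ℝ) (hα : 0 < α) (hα1 : α ≤ 1) (T : ℕ) (hT : 1 ≤ T)
    (m₁ m₂ : ℕ) (h12 : m₁ ≤ m₂) (h2T : m₂ ≤ T) :
    (1 / α) * (1 - (1 - α * m₁ / T) * (1 - α / T) ^ (T - m₁)) ≤
      (1 / α) * (1 - (1 - α * m₂ / T) * (1 - α / T) ^ (T - m₂)) := by
  have hαT : α / T ≤ 1 :=
    div_le_one_of_le₀ (hα1.trans (by exact_mod_cast hT)) T.cast_nonneg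
  have h := one_sub_mul_mul_pow_sub_antitone hαT h12 h2T
  simp only [mul_div_right_comm α] at h ⊢
  gcongr
end

section
/- For α ∈ (0,1] and T ≥ 1, G_CC(T,α) = (1/α)(1 - (1 - α/T)^T) ≥ 1 - (1 - 1/T)^T, i.e., the Conforti–Cornuéjols guarantee dominates the Nemhauser–Wolsey–Fisher guarantee. -/
/-!
Expanding `1 - x ^ T` as a geometric series in `x = 1 - α / T` cancels the factor `1 / α`, so
`G_CC(T, α)` is the average of `x ^ i` over `i < T`. That average increases with `x`, i.e. decreases
with `α`, and `G_NWF(T) = G_CC(T, 1)`.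
-/

open Finset

theorem inv_mul_one_sub_one_sub_div_pow {α : ℝ} (hα : α ≠ 0) (T : ℕ) :
    (1 / α) * (1 - (1 - α / T) ^ T) = (1 / T) * ∑ i ∈ range T, (1 - α / T) ^ i := by
  rw [← mul_neg_geom_sum, sub_sub_cancel]
  field_simp

theorem stmt_4_general (α : ℝ) (hα : 0 < α) (hα1 : α ≤ 1) (T : ℕ) :
    (1 / α) * (1 - (1 - α / T) ^ T) ≥ 1 - (1 - 1 / (T : ℝ)) ^ T := by
  have hbase : 0 ≤ 1 - 1 / (T : ℝ) := Nat.one_sub_one_div_cast_nonneg T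
  have hle : 1 - 1 / (T : ℝ) ≤ 1 - α / T := by gcongr
  calc 1 - (1 - 1 / (T : ℝ)) ^ T
      = (1 / 1) * (1 - (1 - 1 / (T : ℝ)) ^ T) := by rw [div_one, one_mul]
    _ = (1 / T) * ∑ i ∈ range T, (1 - 1 / (T : ℝ)) ^ i :=
        inv_mul_one_sub_one_sub_div_pow one_ne_zero T
    _ ≤ (1 / T) * ∑ i ∈ range T, (1 - α / T) ^ i := by gcongr
    _ = (1 / α) * (1 - (1 - α / T) ^ T) := (inv_mul_one_sub_one_sub_div_pow hα.ne' T).symm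

theorem stmt_4 (α : ℝ) (hα : 0 < α) (hα1 : α ≤ 1) (T : ℕ) (hT : 1 ≤ T) :
    (1 / α) * (1 - (1 - α / T) ^ T) ≥ 1 - (1 - 1 / (T : ℝ)) ^ T :=
  stmt_4_general α hα hα1 T
end

section
/- Let α ∈ (0,1], T ≥ 1, and 1 ≤ r ≤ n with r + (n−r) = n. Define f on subsets of X = {a_1,...,a_r, b_1,...,b_{n−r}} by f({a_{i_1},...,a_{i_s}, b_{j_1},...,b_{j_u}}) = u + (1 − αu/T) Σ_{k=1}^s (1 − α/T)^{i_k − 1}. Then f is submodular. -/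
/-!
With `u(S)` the number of `b`-elements of `S` and `w(S) = Σ_{a_i ∈ S} (1 - α/T)^(i-1)`, we have
`f = u + w - (α/T) u w`. Both `u` and `w` are modular with nonnegative weights (as `α/T ≤ 1`),
and the product of two such functions is supermodular because
`uw(S ∪ R) + uw(S ∩ R) - uw(S) - uw(R) = u(S \ R) w(R \ S) + u(R \ S) w(S \ R) ≥ 0`.
-/

/-- The Conforti–Cornuéjols-type construction: on `X = {a_1,…,a_r} ⊔ {b_1,…,b_k}`
(modeled as `Fin r ⊕ Fin k`), `f(S) = u + (1 − αu/T) Σ_{a_i ∈ S} (1 − α/T)^{i−1}`,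
where `u` is the number of `b`-elements of `S`. -/
noncomputable def constructionF (α : ℝ) (T : ℕ) (r k : ℕ)
    (S : Finset (Fin r ⊕ Fin k)) : ℝ :=
  (∑ x ∈ S, Sum.elim (fun _ => (0 : ℝ)) (fun _ => 1) x)
    + (1 - α * (∑ x ∈ S, Sum.elim (fun _ => (0 : ℝ)) (fun _ => 1) x) / T)
      * ∑ x ∈ S, Sum.elim (fun i : Fin r => (1 - α / T) ^ (i : ℕ)) (fun _ => (0 : ℝ)) x

namespace Finset

variable {ι R : Type*} [DecidableEq ι]

theorem sum_mul_sum_union_add_sum_mul_sum_inter [CommRing R] (g h : ι → R) (s t : Finset ι) :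
    (∑ x ∈ s ∪ t, g x) * (∑ x ∈ s ∪ t, h x) + (∑ x ∈ s ∩ t, g x) * (∑ x ∈ s ∩ t, h x) =
      (∑ x ∈ s, g x) * (∑ x ∈ s, h x) + (∑ x ∈ t, g x) * (∑ x ∈ t, h x) +
        ((∑ x ∈ s \ t, g x) * (∑ x ∈ t \ s, h x) + (∑ x ∈ t \ s, g x) * (∑ x ∈ s \ t, h x)) := by
  have union (f : ι → R) : ∑ x ∈ s ∪ t, f x = ∑ x ∈ s \ t, f x + ∑ x ∈ t, f x := by
    rw [← union_sdiff_right, sum_sdiff subset_union_right]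
  have left (f : ι → R) : ∑ x ∈ s, f x = ∑ x ∈ s ∩ t, f x + ∑ x ∈ s \ t, f x :=
    (sum_inter_add_sum_sdiff s t f).symm
  have right (f : ι → R) : ∑ x ∈ t, f x = ∑ x ∈ s ∩ t, f x + ∑ x ∈ t \ s, f x := by
    rw [inter_comm, sum_inter_add_sum_sdiff]
  rw [union g, union h, left g, left h, right g, right h]
  ring

theorem sum_mul_sum_add_sum_mul_sum_le [CommRing R] [PartialOrder R] [IsOrderedRing R]
    {g h : ι → R} (hg : ∀ x, 0 ≤ g x) (hh : ∀ x, 0 ≤ h x) (s t : Finset ι) :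
    (∑ x ∈ s, g x) * (∑ x ∈ s, h x) + (∑ x ∈ t, g x) * (∑ x ∈ t, h x) ≤
      (∑ x ∈ s ∪ t, g x) * (∑ x ∈ s ∪ t, h x) + (∑ x ∈ s ∩ t, g x) * (∑ x ∈ s ∩ t, h x) := by
  rw [sum_mul_sum_union_add_sum_mul_sum_inter]
  have hg' (u : Finset ι) : 0 ≤ ∑ x ∈ u, g x := sum_nonneg fun x _ => hg x
  have hh' (u : Finset ι) : 0 ≤ ∑ x ∈ u, h x := sum_nonneg fun x _ => hh x
  exact le_add_of_nonneg_right <|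
    add_nonneg (mul_nonneg (hg' _) (hh' _)) (mul_nonneg (hg' _) (hh' _))

end Finset

open Finset

theorem stmt_7_general (α : ℝ) (hα : 0 < α) (hα1 : α ≤ 1) (T r k : ℕ) (hT : 1 ≤ T) :
    ∀ S R : Finset (Fin r ⊕ Fin k),
      constructionF α T r k S + constructionF α T r k R ≥
        constructionF α T r k (S ∪ R) + constructionF α T r k (S ∩ R) := by
  intro S R
  set u : Fin r ⊕ Fin k → ℝ := Sum.elim (fun _ => 0) (fun _ => 1)
  set w : Fin r ⊕ Fin k → ℝ := Sum.elim (fun i : Fin r => (1 - α / T) ^ (i : ℕ)) (fun _ => 0)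
  have hq : 0 ≤ 1 - α / T := sub_nonneg.2 ((div_le_self hα.le (by exact_mod_cast hT)).trans hα1)
  have hu : ∀ x, 0 ≤ u x := by rintro (i | j) <;> simp [u]
  have hw : ∀ x, 0 ≤ w x := by rintro (i | j) <;> simp [w, pow_nonneg hq]
  have hf (X : Finset (Fin r ⊕ Fin k)) : constructionF α T r k X =
      ∑ x ∈ X, u x + ∑ x ∈ X, w x - α / T * ((∑ x ∈ X, u x) * ∑ x ∈ X, w x) := by
    simp only [constructionF]; ring
  simp only [ge_iff_le, hf]
  linear_combination sum_union_inter (s₁ := S) (s₂ := R) (f := u) +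
    sum_union_inter (s₁ := S) (s₂ := R) (f := w) +
    α / T * sum_mul_sum_add_sum_mul_sum_le hu hw S R

theorem stmt_7 (α : ℝ) (hα : 0 < α) (hα1 : α ≤ 1) (T r k : ℕ) (hT : 1 ≤ T)
    (hkT : k ≤ T) :
    ∀ S R : Finset (Fin r ⊕ Fin k),
      constructionF α T r k S + constructionF α T r k R ≥
        constructionF α T r k (S ∪ R) + constructionF α T r k (S ∩ R) :=
  stmt_7_general α hα hα1 T r k hT
end

section
/- With f as in the Conforti–Cornuéjols-type construction (f({a_{i_1},...,a_{i_s}, b_{j_1},...,b_{j_u}}) = u + (1 − αu/T) Σ_{k=1}^s (1 − α/T)^{i_k − 1}, with n − r ≤ T), f is nondecreasing: for any S ⊊ X and x ∉ S, f(S ∪ {x}) ≥ f(S). -/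
open Finset

noncomputable def countB {ι κ : Type*} (S : Finset (ι ⊕ κ)) : ℝ :=
  ∑ x ∈ S, Sum.elim (fun _ => (0 : ℝ)) (fun _ => 1) x

noncomputable def weightA {r : ℕ} {κ : Type*} (q : ℝ) (S : Finset (Fin r ⊕ κ)) : ℝ :=
  ∑ x ∈ S, Sum.elim (fun i : Fin r => q ^ (i : ℕ)) (fun _ => (0 : ℝ)) x

theorem constructionF_eq (α : ℝ) (T r k : ℕ) (S : Finset (Fin r ⊕ Fin k)) :
    constructionF α T r k S = countB S + (1 - α * countB S / T) * weightA (1 - α / T) S :=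
  rfl

theorem countB_le {ι κ : Type*} [Fintype ι] [Fintype κ] (S : Finset (ι ⊕ κ)) :
    countB S ≤ Fintype.card κ := by
  calc countB S ≤ ∑ x, Sum.elim (fun _ => (0 : ℝ)) (fun _ => 1) x :=
        sum_le_univ_sum_of_nonneg (by rintro (_ | _) <;> simp)
    _ = Fintype.card κ := by simp [Fintype.sum_sum_type]

theorem countB_nonneg {ι κ : Type*} (S : Finset (ι ⊕ κ)) : 0 ≤ countB S :=
  sum_nonneg (by rintro (_ | _) <;> simp)

theorem weightA_le_geom_sum {r : ℕ} {κ : Type*} [Fintype κ] {q : ℝ} (hq : 0 ≤ q)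
    (S : Finset (Fin r ⊕ κ)) : weightA q S ≤ ∑ i ∈ range r, q ^ i := by
  calc weightA q S ≤ ∑ x, Sum.elim (fun i : Fin r => q ^ (i : ℕ)) (fun _ => (0 : ℝ)) x :=
        sum_le_univ_sum_of_nonneg (by rintro (_ | _) <;> simp [pow_nonneg hq])
    _ = ∑ i ∈ range r, q ^ i := by simp [Fintype.sum_sum_type, Fin.sum_univ_eq_sum_range]

theorem one_sub_mul_weightA_le_one {r : ℕ} {κ : Type*} [Fintype κ] {q : ℝ} (hq0 : 0 ≤ q)
    (hq1 : q ≤ 1) (S : Finset (Fin r ⊕ κ)) : (1 - q) * weightA q S ≤ 1 := by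
  calc (1 - q) * weightA q S ≤ (1 - q) * ∑ i ∈ range r, q ^ i :=
        mul_le_mul_of_nonneg_left (weightA_le_geom_sum hq0 S) (sub_nonneg.2 hq1)
    _ = 1 - q ^ r := mul_neg_geom_sum q r
    _ ≤ 1 := sub_le_self _ (pow_nonneg hq0 r)

theorem constructionF_insert_inl (α : ℝ) (T r k : ℕ) {S : Finset (Fin r ⊕ Fin k)} {i : Fin r}
    (hi : Sum.inl i ∉ S) :
    constructionF α T r k (insert (Sum.inl i) S)
      = constructionF α T r k S + (1 - α * countB S / T) * (1 - α / T) ^ (i : ℕ) := by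
  simp only [constructionF_eq, countB, weightA, sum_insert hi, Sum.elim_inl]
  ring

theorem constructionF_insert_inr (α : ℝ) (T r k : ℕ) {S : Finset (Fin r ⊕ Fin k)} {j : Fin k}
    (hj : Sum.inr j ∉ S) :
    constructionF α T r k (insert (Sum.inr j) S)
      = constructionF α T r k S + (1 - α / T * weightA (1 - α / T) S) := by
  simp only [constructionF_eq, countB, weightA, sum_insert hj, Sum.elim_inr]
  ring

theorem stmt_8 (α : ℝ) (hα : 0 < α) (hα1 : α ≤ 1) (T r k : ℕ) (hT : 1 ≤ T)
    (hkT : k ≤ T) (S : Finset (Fin r ⊕ Fin k)) (x : Fin r ⊕ Fin k) (hx : x ∉ S) :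
    constructionF α T r k (insert x S) ≥ constructionF α T r k S := by
  have hαT : α ≤ T := hα1.trans (by exact_mod_cast hT)
  have hq0 : 0 ≤ 1 - α / T := sub_nonneg.2 (div_le_one_of_le₀ hαT T.cast_nonneg)
  rcases x with i | j
  · have hu : α * countB S ≤ T :=
      calc α * countB S ≤ 1 * Fintype.card (Fin k) :=
          mul_le_mul hα1 (countB_le S) (countB_nonneg S) zero_le_one
        _ ≤ T := by simpa using hkT
    rw [constructionF_insert_inl α T r k hx, ge_iff_le, le_add_iff_nonneg_right]
    exact mul_nonneg (sub_nonneg.2 (div_le_one_of_le₀ hu T.cast_nonneg)) (pow_nonneg hq0 _)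
  · have hA : α / T * weightA (1 - α / T) S ≤ 1 := by
      simpa using one_sub_mul_weightA_le_one hq0 (sub_le_self _ (by positivity)) S
    rw [constructionF_insert_inr α T r k hx]
    linarith
end

section
/- With f as in the construction, for any S = {a_{i_1},...,a_{i_s}, b_{j_1},...,b_{j_u}} ⊊ X and b_j ∉ S, the marginal gain is f(S ∪ {b_j}) − f(S) = 1 − (α/T) Σ_{k=1}^s (1 − α/T)^{i_k − 1}, and this quantity is nonnegative. -/
open Finset

lemma sum_elim_zero_le_sum {ι κ M : Type*} [Fintype ι] [AddCommMonoid M] [PartialOrder M]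
    [IsOrderedAddMonoid M] {g : ι → M} (hg : 0 ≤ g) (S : Finset (ι ⊕ κ)) :
    ∑ x ∈ S, Sum.elim g (fun _ => 0) x ≤ ∑ i, g i := by
  rw [sum_sum_eq_sum_toLeft_add_sum_toRight]
  simpa using sum_le_univ_sum_of_nonneg (s := S.toLeft) hg

lemma mul_geom_sum_one_sub_le_one {q : ℝ} (hq1 : q ≤ 1) (r : ℕ) :
    q * ∑ i ∈ range r, (1 - q) ^ i ≤ 1 := by
  have hgeom : q * ∑ i ∈ range r, (1 - q) ^ i = 1 - (1 - q) ^ r := by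
    simpa [mul_comm] using geom_sum_mul_neg (1 - q) r
  rw [hgeom]
  exact sub_le_self 1 (pow_nonneg (sub_nonneg.mpr hq1) r)

lemma constructionF_insert_inr_sub (α : ℝ) (T r k : ℕ) {S : Finset (Fin r ⊕ Fin k)} {j : Fin k}
    (hj : Sum.inr j ∉ S) :
    constructionF α T r k (insert (Sum.inr j) S) - constructionF α T r k S =
      1 - (α / T) * ∑ x ∈ S,
        Sum.elim (fun i : Fin r => (1 - α / T) ^ (i : ℕ)) (fun _ => (0 : ℝ)) x := by
  simp only [constructionF, sum_insert hj, Sum.elim_inr]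
  ring

theorem stmt_10_general (α : ℝ) (hα : 0 < α) (hα1 : α ≤ 1) (T r k : ℕ) (hT : 1 ≤ T)
    (S : Finset (Fin r ⊕ Fin k)) (j : Fin k) (hj : Sum.inr j ∉ S) :
    constructionF α T r k (insert (Sum.inr j) S) - constructionF α T r k S =
      1 - (α / T) * ∑ x ∈ S,
        Sum.elim (fun i : Fin r => (1 - α / T) ^ (i : ℕ)) (fun _ => (0 : ℝ)) x ∧
    0 ≤ 1 - (α / T) * ∑ x ∈ S,
        Sum.elim (fun i : Fin r => (1 - α / T) ^ (i : ℕ)) (fun _ => (0 : ℝ)) x := by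
  refine ⟨constructionF_insert_inr_sub α T r k hj, sub_nonneg.mpr ?_⟩
  have hT1 : (1 : ℝ) ≤ T := by exact_mod_cast hT
  have hq0 : 0 ≤ α / T := by positivity
  have hq1 : α / T ≤ 1 := div_le_one_of_le₀ (hα1.trans hT1) (by positivity)
  calc α / T * ∑ x ∈ S, Sum.elim (fun i : Fin r => (1 - α / T) ^ (i : ℕ)) (fun _ => 0) x
      ≤ α / T * ∑ i : Fin r, (1 - α / T) ^ (i : ℕ) :=
        mul_le_mul_of_nonneg_left
          (sum_elim_zero_le_sum (fun _ => pow_nonneg (sub_nonneg.mpr hq1) _) S) hq0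
    _ = α / T * ∑ i ∈ range r, (1 - α / T) ^ i := by rw [Fin.sum_univ_eq_sum_range]
    _ ≤ 1 := mul_geom_sum_one_sub_le_one hq1 r

theorem stmt_10 (α : ℝ) (hα : 0 < α) (hα1 : α ≤ 1) (T r k : ℕ) (hT : 1 ≤ T)
    (hkT : k ≤ T) (S : Finset (Fin r ⊕ Fin k)) (j : Fin k) (hj : Sum.inr j ∉ S) :
    constructionF α T r k (insert (Sum.inr j) S) - constructionF α T r k S =
      1 - (α / T) * ∑ x ∈ S,
        Sum.elim (fun i : Fin r => (1 - α / T) ^ (i : ℕ)) (fun _ => (0 : ℝ)) x ∧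
    0 ≤ 1 - (α / T) * ∑ x ∈ S,
        Sum.elim (fun i : Fin r => (1 - α / T) ^ (i : ℕ)) (fun _ => (0 : ℝ)) x :=
  stmt_10_general α hα hα1 T r k hT S j hj
end

section
/- Let α ∈ (0,1], integers 0 < m < T, and define c ∈ ℝ^T by c_t = (1/T)(1 − αm/T)(1 − α/T)^{T−m−t} for 1 ≤ t ≤ T−m and c_t = (T−m)/((2T−m+1−t)(2T−m−t)) for T−m+1 ≤ t ≤ T. Then c is feasible for the dual linear program: c_t ≥ 0 for all t; T·c_t + α Σ_{i=t+1}^T c_i ≤ 1 for 1 ≤ t ≤ T−m; and (2T−m+1−t)c_t + Σ_{i=t+1}^T c_i ≤ 1 for T−m+1 ≤ t ≤ T. Moreover these T constraints hold with equality. -/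
open Finset

/-! Both blocks of `c` telescope. On the tail block `c t = g t - g (t - 1)` with
`g t = (T - m) / (2T - m - t)`, so `∑_{i > t} c i = 1 - g t`; at `t = T - m` this is `m / T`.
On the head block, with `K = 1 - αm/T` and `q = 1 - α/T`, one has
`α c t = K q^(T-m-t) - K q^(T-m-t+1)`, so `α ∑_{i > t} c i = K - K q^(T-m-t) + αm/T = 1 - T c t`. -/

theorem Finset.sum_Ioc_eq_sub_of_succ {M : Type*} [AddCommGroup M] {f c : ℕ → M} {a b : ℕ}
    (hab : a ≤ b) (h : ∀ i, a ≤ i → i < b → c (i + 1) = f (i + 1) - f i) :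
    ∑ i ∈ Ioc a b, c i = f b - f a := by
  induction b, hab using Nat.le_induction with
  | base => simp
  | succ b hab ih =>
    rw [sum_Ioc_succ_top hab, ih fun i hai hib => h i hai (by omega), h b hab (by omega)]
    abel

section DualFeasibility

variable {α : ℝ} {T m : ℕ} {c : ℕ → ℝ}

theorem sum_Ioc_eq_of_tail_block (hmT : m < T)
    (hc2 : ∀ t, T - m + 1 ≤ t → t ≤ T →
      c t = ((T : ℝ) - m) / ((2 * T - m + 1 - t) * (2 * T - m - t)))
    {t : ℕ} (ht : T - m ≤ t) (htT : t ≤ T) :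
    ∑ i ∈ Ioc t T, c i = 1 - ((T : ℝ) - m) / (2 * T - m - t) := by
  have hmT' : (m : ℝ) < T := by exact_mod_cast hmT
  have hn : (T : ℝ) - m ≠ 0 := by linarith
  rw [sum_Ioc_eq_sub_of_succ (f := fun i : ℕ => ((T : ℝ) - m) / (2 * T - m - i)) htT]
  · rw [show 2 * (T : ℝ) - m - T = T - m by ring, div_self hn]
  intro i hti hiT
  have hiT' : (i : ℝ) + 1 ≤ T := by exact_mod_cast hiT
  rw [hc2 (i + 1) (by omega) hiT]
  have hd₁ : 2 * (T : ℝ) - m - (i + 1) ≠ 0 := by linarith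
  have hd₂ : 2 * (T : ℝ) - m - i ≠ 0 := by linarith
  push_cast
  rw [show 2 * (T : ℝ) - m + 1 - (i + 1) = 2 * T - m - i by ring, div_sub_div _ _ hd₁ hd₂]
  congr 1 <;> ring

theorem mul_sum_Ioc_eq_of_head_block (hmT : m < T)
    (hc1 : ∀ t, 1 ≤ t → t ≤ T - m →
      c t = (1 / T) * (1 - α * m / T) * (1 - α / T) ^ (T - m - t))
    (hc2 : ∀ t, T - m + 1 ≤ t → t ≤ T →
      c t = ((T : ℝ) - m) / ((2 * T - m + 1 - t) * (2 * T - m - t)))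
    {t : ℕ} (ht : t ≤ T - m) :
    α * ∑ i ∈ Ioc t T, c i = 1 - (1 - α * m / T) * (1 - α / T) ^ (T - m - t) := by
  have hT : (T : ℝ) ≠ 0 := by positivity [(Nat.zero_le m).trans_lt hmT]
  have hTm : ((T - m : ℕ) : ℝ) = T - m := by push_cast [hmT.le]; ring
  rw [← sum_Ioc_consecutive _ ht (Nat.sub_le T m), mul_add,
    sum_Ioc_eq_of_tail_block hmT hc2 le_rfl (Nat.sub_le T m), hTm,
    mul_sum, sum_Ioc_eq_sub_of_succ
      (f := fun i => (1 - α * m / T) * (1 - α / T) ^ (T - m - i)) ht]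
  · rw [Nat.sub_self, pow_zero, show 2 * (T : ℝ) - m - (T - m) = T by ring]
    field_simp
    ring
  intro i _ hi
  rw [hc1 (i + 1) (by omega) hi, show T - m - i = T - m - (i + 1) + 1 by omega, pow_succ]
  field_simp
  ring

theorem nonneg_of_block_formulas (hα1 : α ≤ 1) (hmT : m < T)
    (hc1 : ∀ t, 1 ≤ t → t ≤ T - m →
      c t = (1 / T) * (1 - α * m / T) * (1 - α / T) ^ (T - m - t))
    (hc2 : ∀ t, T - m + 1 ≤ t → t ≤ T →
      c t = ((T : ℝ) - m) / ((2 * T - m + 1 - t) * (2 * T - m - t)))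
    {t : ℕ} (ht : 1 ≤ t) (htT : t ≤ T) : 0 ≤ c t := by
  have hmT' : (m : ℝ) < T := by exact_mod_cast hmT
  rcases le_or_gt t (T - m) with hhead | htail
  · have hT : (0 : ℝ) < T := by exact_mod_cast (Nat.zero_le m).trans_lt hmT
    have hT1 : (1 : ℝ) ≤ T := by exact_mod_cast (Nat.zero_le m).trans_lt hmT
    have hαm : α * m ≤ m := mul_le_of_le_one_left (Nat.cast_nonneg m) hα1
    have hK : 0 ≤ 1 - α * m / T := by rw [sub_nonneg, div_le_one hT]; linarith
    have hq : 0 ≤ 1 - α / T := by rw [sub_nonneg, div_le_one hT]; linarith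
    rw [hc1 t ht hhead]
    positivity
  · have htT' : (t : ℝ) ≤ T := by exact_mod_cast htT
    rw [hc2 t (by omega) htT]
    exact div_nonneg (by linarith) (mul_nonneg (by linarith) (by linarith))

end DualFeasibility

theorem stmt_13_general (α : ℝ) (hα1 : α ≤ 1) (T m : ℕ) (hmT : m < T)
    (c : ℕ → ℝ)
    (hc1 : ∀ t, 1 ≤ t → t ≤ T - m →
      c t = (1 / T) * (1 - α * m / T) * (1 - α / T) ^ (T - m - t))
    (hc2 : ∀ t, T - m + 1 ≤ t → t ≤ T →
      c t = ((T : ℝ) - m) / ((2 * T - m + 1 - t) * (2 * T - m - t))) :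
    (∀ t, 1 ≤ t → t ≤ T → 0 ≤ c t) ∧
    (∀ t, 1 ≤ t → t ≤ T - m →
      (T : ℝ) * c t + α * ∑ i ∈ Finset.Icc (t + 1) T, c i = 1) ∧
    (∀ t, T - m + 1 ≤ t → t ≤ T →
      (2 * (T : ℝ) - m + 1 - t) * c t + ∑ i ∈ Finset.Icc (t + 1) T, c i = 1) := by
  refine ⟨fun t ht htT => nonneg_of_block_formulas hα1 hmT hc1 hc2 ht htT,
    fun t ht htm => ?_, fun t ht htT => ?_⟩
  · have hT : (T : ℝ) ≠ 0 := by positivity [(Nat.zero_le m).trans_lt hmT]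
    rw [Icc_add_one_left_eq_Ioc, mul_sum_Ioc_eq_of_head_block hmT hc1 hc2 htm, hc1 t ht htm]
    field_simp
    ring
  · have htT' : (t : ℝ) ≤ T := by exact_mod_cast htT
    have hmT' : (m : ℝ) < T := by exact_mod_cast hmT
    have hd : 2 * (T : ℝ) - m - t ≠ 0 := by linarith
    have hd' : 2 * (T : ℝ) - m + 1 - t ≠ 0 := by linarith
    rw [Icc_add_one_left_eq_Ioc, sum_Ioc_eq_of_tail_block hmT hc2 (by omega) htT, hc2 t ht htT]
    field_simp
    ring

theorem stmt_13 (α : ℝ) (hα : 0 < α) (hα1 : α ≤ 1) (T m : ℕ) (hm : 0 < m) (hmT : m < T)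
    (c : ℕ → ℝ)
    (hc1 : ∀ t, 1 ≤ t → t ≤ T - m →
      c t = (1 / T) * (1 - α * m / T) * (1 - α / T) ^ (T - m - t))
    (hc2 : ∀ t, T - m + 1 ≤ t → t ≤ T →
      c t = ((T : ℝ) - m) / ((2 * T - m + 1 - t) * (2 * T - m - t))) :
    (∀ t, 1 ≤ t → t ≤ T → 0 ≤ c t) ∧
    (∀ t, 1 ≤ t → t ≤ T - m →
      (T : ℝ) * c t + α * ∑ i ∈ Finset.Icc (t + 1) T, c i = 1) ∧
    (∀ t, T - m + 1 ≤ t → t ≤ T →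
      (2 * (T : ℝ) - m + 1 - t) * c t + ∑ i ∈ Finset.Icc (t + 1) T, c i = 1) :=
  stmt_13_general α hα1 T m hmT c hc1 hc2
end

section
/- For α ∈ (0,1] and even n ≥ 2, the minimum over integers T with 1 ≤ T ≤ n of G̃(T,α,n) := G(T,α,max(0,2T−n)) is attained at T = n/2 and equals (1/α)(1 − (1 − α/(n/2))^{n/2}). -/
/-!
Write `k = n / 2`. For `T ≤ k` there is no truncation, `G̃(T) = (1 - (1 - α/T)^T)/α`, and
`(1 - α/T)^T` increases with `T` (AM-GM applied to `1` and `T` copies of `1 - α/T`).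
For `T = k + j > k`, AM-GM on the `k - j + 1` factors of `(1 - 2jα/T)(1 - α/T)^(k-j)` bounds it
by `(1 - α/(k - j + 1))^(k - j + 1) ≤ (1 - α/k)^k`, since the factors sum to `k - j + 1 - α`.
-/

/-- `G(T,α,m) = (1/α)(1 − (1 − αm/T)(1 − α/T)^{T−m})`. -/
noncomputable def G (T : ℕ) (α : ℝ) (m : ℕ) : ℝ :=
  (1 / α) * (1 - (1 - α * m / T) * (1 - α / T) ^ (T - m))

/-- `G̃(T,α,n) = G(T,α,max(0,2T−n))` (note `2*T - n` is truncated ℕ-subtraction,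
which equals `max 0 (2T − n)`). -/
noncomputable def Gtilde (T : ℕ) (α : ℝ) (n : ℕ) : ℝ := G T α (2 * T - n)

theorem mul_pow_le_mean_pow (s : ℕ) {a b : ℝ} (ha : 0 ≤ a) (hb : 0 ≤ b) :
    a * b ^ s ≤ ((a + s * b) / (s + 1)) ^ (s + 1) := by
  have hs : (0 : ℝ) < s + 1 := by positivity
  have hgm := Real.geom_mean_le_arith_mean2_weighted (w₁ := 1 / (s + 1)) (w₂ := s / (s + 1))
    (by positivity) (by positivity) ha hb (by rw [← add_div, add_comm, div_self hs.ne'])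
  calc a * b ^ s = (a ^ (1 / (s + 1) : ℝ) * b ^ (s / (s + 1) : ℝ)) ^ (s + 1) := by
        rw [mul_pow, ← Real.rpow_mul_natCast ha, ← Real.rpow_mul_natCast hb]
        push_cast
        rw [div_mul_cancel₀ _ hs.ne', div_mul_cancel₀ _ hs.ne', Real.rpow_one, Real.rpow_natCast]
    _ ≤ (1 / (s + 1) * a + s / (s + 1) * b) ^ (s + 1) := by gcongr
    _ = ((a + s * b) / (s + 1)) ^ (s + 1) := by ring

theorem one_sub_div_natCast_nonneg {α : ℝ} {T : ℕ} (hαT : α ≤ T) : 0 ≤ 1 - α / T :=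
  sub_nonneg.2 (div_le_one_of_le₀ hαT T.cast_nonneg)

theorem one_sub_div_pow_le_succ {α : ℝ} {T : ℕ} (hT : 0 < T) (hαT : α ≤ T) :
    (1 - α / T) ^ T ≤ (1 - α / (T + 1 : ℕ)) ^ (T + 1) := by
  have h := mul_pow_le_mean_pow T zero_le_one (one_sub_div_natCast_nonneg hαT)
  rw [one_mul] at h
  convert h using 2
  push_cast
  field_simp
  ring

theorem one_sub_div_pow_mono {α : ℝ} {S T : ℕ} (hS : 0 < S) (hαS : α ≤ S) (hST : S ≤ T) :
    (1 - α / S) ^ S ≤ (1 - α / T) ^ T := by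
  induction T, hST using Nat.le_induction with
  | base => rfl
  | succ T hST ih =>
    exact ih.trans (one_sub_div_pow_le_succ (hS.trans_le hST)
      (hαS.trans (by exact_mod_cast hST)))

theorem one_sub_two_mul_div_mul_pow_le {α : ℝ} (hα : α ≤ 1) {s j : ℕ} (hj : 0 < j) :
    (1 - α * (2 * j : ℕ) / (s + 2 * j : ℕ)) * (1 - α / (s + 2 * j : ℕ)) ^ s ≤
      (1 - α / (s + j : ℕ)) ^ (s + j) := by
  have hT : (1 : ℝ) ≤ (s + 2 * j : ℕ) := by exact_mod_cast (by omega : 1 ≤ s + 2 * j)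
  have hb := one_sub_div_natCast_nonneg (hα.trans hT)
  rcases le_or_gt 0 (1 - α * (2 * j : ℕ) / (s + 2 * j : ℕ)) with ha | ha
  · calc _ ≤ ((1 - α * (2 * j : ℕ) / (s + 2 * j : ℕ) + s * (1 - α / (s + 2 * j : ℕ))) / (s + 1))
            ^ (s + 1) := mul_pow_le_mean_pow s ha hb
      _ = (1 - α / (s + 1 : ℕ)) ^ (s + 1) := by
        congr 1
        push_cast at hT ⊢
        field_simp
        ring
      _ ≤ (1 - α / (s + j : ℕ)) ^ (s + j) :=
        one_sub_div_pow_mono (by omega) (hα.trans (by simp)) (by omega)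
  · have hsj : (1 : ℝ) ≤ (s + j : ℕ) := by exact_mod_cast (by omega : 1 ≤ s + j)
    exact (mul_nonpos_of_nonpos_of_nonneg ha.le (pow_nonneg hb s)).trans
      (pow_nonneg (one_sub_div_natCast_nonneg (hα.trans hsj)) _)

theorem G_zero (T : ℕ) (α : ℝ) : G T α 0 = 1 / α * (1 - (1 - α / T) ^ T) := by
  simp [G]

theorem G_zero_le_G {α : ℝ} (hα : 0 < α) {S T m : ℕ}
    (h : (1 - α * m / T) * (1 - α / T) ^ (T - m) ≤ (1 - α / S) ^ S) : G S α 0 ≤ G T α m := by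
  rw [G_zero, G]
  gcongr

theorem stmt_17_general (α : ℝ) (hα : 0 < α) (hα1 : α ≤ 1) (n : ℕ)
    (heven : Even n) :
    (∀ T, 1 ≤ T → T ≤ n → Gtilde (n / 2) α n ≤ Gtilde T α n) ∧
      Gtilde (n / 2) α n = (1 / α) * (1 - (1 - α / (n / 2 : ℕ)) ^ (n / 2)) := by
  obtain ⟨k, rfl⟩ := heven
  have hmin : Gtilde k α (k + k) = G k α 0 := by rw [Gtilde, show 2 * k - (k + k) = 0 by omega]
  rw [show (k + k) / 2 = k by omega, hmin]
  refine ⟨fun T hT hTn => ?_, G_zero k α⟩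
  rcases le_or_gt T k with hTk | hkT
  · rw [Gtilde, show 2 * T - (k + k) = 0 by omega]
    refine G_zero_le_G hα ?_
    simpa using one_sub_div_pow_mono hT (hα1.trans (by exact_mod_cast hT)) hTk
  · obtain ⟨j, s, rfl, rfl⟩ : ∃ j s, T = s + 2 * j ∧ k = s + j :=
      ⟨T - k, 2 * k - T, by omega, by omega⟩
    rw [Gtilde, show 2 * (s + 2 * j) - (s + j + (s + j)) = 2 * j by omega]
    refine G_zero_le_G hα ?_
    rw [Nat.add_sub_cancel]
    exact one_sub_two_mul_div_mul_pow_le hα1 (by omega)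

theorem stmt_17 (α : ℝ) (hα : 0 < α) (hα1 : α ≤ 1) (n : ℕ) (hn : 2 ≤ n)
    (heven : Even n) :
    (∀ T, 1 ≤ T → T ≤ n → Gtilde (n / 2) α n ≤ Gtilde T α n) ∧
      Gtilde (n / 2) α n = (1 / α) * (1 - (1 - α / (n / 2 : ℕ)) ^ (n / 2)) :=
  stmt_17_general α hα hα1 n heven
end
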